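/- There exist constants C > 0 and m₀ ≥ 1, depending only on μ, such that for all integers m, n with m₀ < m ≤ n and X_m ≤ X_n ≤ 2X_m, and every real number k with k > X_m^{1/3}, one has |∫_{X_m^{2/3}}^{X_m - X_m^{1/3}} ⟨x⟩^μ e^{ikx} h_m(x) h_n(x) dx| ≤ C · k · m^{-(1/12 - μ/4)} · n^{-(1/12 - μ/4)}. -/

import Mathlib

/-!
No cancellation from `e^{ikx}` is needed. On `[-X_m, X_m]` the weight is at most
`⟨X_m⟩^μ = (2m)^{μ/2}`, and `|h_m h_n| ≤ (h_m² + h_n²)/2` has integral `1`: the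
normalisation `∫ e^{-x²} H_k² = 2^k k! √π` follows by integrating
`(e^{-x²} H_k H_{k+1})' = 2(k+1) e^{-x²} H_k² - e^{-x²} H_{k+1}²` over `ℝ`.
Since `X_n ≤ 2X_m` gives `n ≤ 4m`, writing `(2m)^{μ/2} = (2m)^{1/6} (4m²)^{-(1/12 - μ/4)}`
and `(2m)^{1/6} ≤ 2 X_m^{1/3} < 2k` yields the bound with `C = 2`.
-/

open Real MeasureTheory intervalIntegral

/-- Physicists' Hermite polynomials, as functions on `ℝ`. -/
noncomputable def physHermite : ℕ → ℝ → ℝ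
  | 0, _ => 1
  | 1, x => 2 * x
  | n + 2, x => 2 * x * physHermite (n + 1) x - 2 * ((n : ℝ) + 1) * physHermite n x

/-- The `j`-th Hermite function (for `j ≥ 1`), the `L²`-normalized eigenfunction of
`-d²/dx² + x²` with eigenvalue `2j - 1`. -/
noncomputable def hermiteFun (j : ℕ) (x : ℝ) : ℝ :=
  ((2 : ℝ) ^ (j - 1) * (Nat.factorial (j - 1) : ℝ) * Real.sqrt Real.pi) ^ (-(1 : ℝ) / 2) *
    Real.exp (-x ^ 2 / 2) * physHermite (j - 1) x

/-- The turning point `X_j = √(2j - 1)`. -/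
noncomputable def Xpt (j : ℕ) : ℝ := Real.sqrt (2 * (j : ℝ) - 1)

/-- The oscillatory integrand `⟨x⟩^μ e^{ikx} h_m(x) h_n(x)`. -/
noncomputable def osc (μ k : ℝ) (m n : ℕ) (x : ℝ) : ℂ :=
  (Real.sqrt (1 + x ^ 2) ^ μ : ℝ) * Complex.exp (Complex.I * k * x) *
    (hermiteFun m x : ℂ) * (hermiteFun n x : ℂ)

open Filter Set Topology
open scoped Nat Interval

-- At `n = 0` the truncated `n - 1` is harmless: its coefficient `2 * n` vanishes.
theorem physHermite_succ (n : ℕ) (x : ℝ) :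
    physHermite (n + 1) x = 2 * x * physHermite n x - 2 * n * physHermite (n - 1) x := by
  cases n <;> simp [physHermite]

theorem hasDerivAt_physHermite (n : ℕ) (x : ℝ) :
    HasDerivAt (physHermite n) (2 * n * physHermite (n - 1) x) x := by
  induction n using Nat.twoStepInduction generalizing x with
  | zero => exact (hasDerivAt_const x (1 : ℝ)).congr_deriv (by simp)
  | one => exact ((hasDerivAt_id x).const_mul (2 : ℝ)).congr_deriv (by simp [physHermite])
  | more n ih ih' =>
    have h : HasDerivAt
        (fun y => 2 * y * physHermite (n + 1) y - 2 * ((n : ℝ) + 1) * physHermite n y) _ x :=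
      (((hasDerivAt_id x).const_mul 2).mul (ih' x)).sub ((ih x).const_mul (2 * ((n : ℝ) + 1)))
    refine h.congr_deriv ?_
    simp only [id, Nat.add_sub_cancel]
    push_cast
    linear_combination (-2 * ((n : ℝ) + 1)) * physHermite_succ n x

theorem continuous_physHermite (n : ℕ) : Continuous (physHermite n) :=
  continuous_iff_continuousAt.2 fun x => (hasDerivAt_physHermite n x).continuousAt

theorem exists_abs_physHermite_le (n : ℕ) :
    ∃ C, 0 ≤ C ∧ ∀ x, |physHermite n x| ≤ C * (1 + x ^ 2) ^ n := by
  induction n using Nat.twoStepInduction with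
  | zero => exact ⟨1, zero_le_one, fun x => by simp [physHermite]⟩
  | one =>
    refine ⟨2, zero_le_two, fun x => ?_⟩
    simp only [physHermite, abs_mul, abs_two, pow_one]
    nlinarith [abs_nonneg x, sq_abs x]
  | more n ih ih' =>
    obtain ⟨C, hC0, hC⟩ := ih
    obtain ⟨C', hC'0, hC'⟩ := ih'
    refine ⟨2 * C' + 2 * (n + 1) * C, by positivity, fun x => ?_⟩
    have hx : |x| ≤ 1 + x ^ 2 := by nlinarith [abs_nonneg x, sq_abs x]
    have hpow : (1 + x ^ 2) ^ n ≤ (1 + x ^ 2) ^ (n + 2) :=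
      pow_le_pow_right₀ (by nlinarith) (by omega)
    calc |physHermite (n + 2) x|
        ≤ 2 * |x| * |physHermite (n + 1) x| + 2 * (n + 1) * |physHermite n x| := by
          refine (abs_sub _ _).trans (le_of_eq ?_)
          rw [abs_mul, abs_mul, abs_mul, abs_two,
            abs_of_nonneg (by positivity : (0 : ℝ) ≤ 2 * (n + 1))]
      _ ≤ 2 * (1 + x ^ 2) * (C' * (1 + x ^ 2) ^ (n + 1)) +
            2 * (n + 1) * (C * (1 + x ^ 2) ^ (n + 2)) := by
          gcongr
          · exact hC' x
          · exact (hC x).trans (by gcongr)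
      _ = _ := by ring

theorem one_add_sq_pow_mul_exp_neg_sq_le (j : ℕ) (x : ℝ) :
    (1 + x ^ 2) ^ j * exp (-x ^ 2) ≤ 2 ^ j * j ! * exp (1 / 2) * exp (-(1 / 2) * x ^ 2) := by
  have h := pow_div_factorial_le_exp (x := (1 + x ^ 2) / 2) (by positivity) j
  rw [div_pow, div_div, div_le_iff₀ (by positivity)] at h
  have hexp : exp ((1 + x ^ 2) / 2) * exp (-x ^ 2) = exp (1 / 2) * exp (-(1 / 2) * x ^ 2) := by
    rw [← exp_add, ← exp_add]; ring_nf
  calc (1 + x ^ 2) ^ j * exp (-x ^ 2)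
        ≤ exp ((1 + x ^ 2) / 2) * (2 ^ j * j !) * exp (-x ^ 2) := by gcongr
    _ = _ := by linear_combination (2 ^ j * (j ! : ℝ)) * hexp

theorem exists_abs_exp_neg_sq_mul_physHermite_mul_le (a b : ℕ) :
    ∃ D, ∀ x,
      |exp (-x ^ 2) * physHermite a x * physHermite b x| ≤ D * exp (-(1 / 2) * x ^ 2) := by
  obtain ⟨C, hC0, hC⟩ := exists_abs_physHermite_le a
  obtain ⟨C', hC'0, hC'⟩ := exists_abs_physHermite_le b
  refine ⟨C * C' * (2 ^ (a + b) * (a + b)! * exp (1 / 2)), fun x => ?_⟩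
  calc |exp (-x ^ 2) * physHermite a x * physHermite b x|
      = exp (-x ^ 2) * |physHermite a x| * |physHermite b x| := by
        rw [abs_mul, abs_mul, abs_of_pos (exp_pos _)]
    _ ≤ exp (-x ^ 2) * (C * (1 + x ^ 2) ^ a) * (C' * (1 + x ^ 2) ^ b) := by
        gcongr
        · exact hC x
        · exact hC' x
    _ = C * C' * ((1 + x ^ 2) ^ (a + b) * exp (-x ^ 2)) := by ring
    _ ≤ C * C' * (2 ^ (a + b) * (a + b)! * exp (1 / 2) * exp (-(1 / 2) * x ^ 2)) :=
        mul_le_mul_of_nonneg_left (one_add_sq_pow_mul_exp_neg_sq_le _ x) (by positivity)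
    _ = _ := by ring

theorem integrable_exp_neg_sq_mul_physHermite_mul (a b : ℕ) :
    Integrable fun x => exp (-x ^ 2) * physHermite a x * physHermite b x := by
  obtain ⟨D, hD⟩ := exists_abs_exp_neg_sq_mul_physHermite_mul_le a b
  refine ((integrable_exp_neg_mul_sq (by norm_num : (0 : ℝ) < 1 / 2)).const_mul D).mono' ?_
    (ae_of_all _ hD)
  exact (((continuous_pow 2).neg.rexp.mul (continuous_physHermite a)).mul
    (continuous_physHermite b)).aestronglyMeasurable

theorem tendsto_exp_neg_sq_mul_physHermite_mul_cocompact (a b : ℕ) :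
    Tendsto (fun x => exp (-x ^ 2) * physHermite a x * physHermite b x)
      (cocompact ℝ) (𝓝 0) := by
  obtain ⟨D, hD⟩ := exists_abs_exp_neg_sq_mul_physHermite_mul_le a b
  have h := (tendsto_rpow_abs_mul_exp_neg_mul_sq_cocompact
    (by norm_num : (0 : ℝ) < 1 / 2) 0).const_mul D
  simp only [rpow_zero, one_mul, mul_zero] at h
  exact squeeze_zero_norm hD h

theorem integral_exp_neg_sq_mul_physHermite_succ_sq (k : ℕ) :
    ∫ x, exp (-x ^ 2) * physHermite (k + 1) x * physHermite (k + 1) x =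
      2 * (k + 1) * ∫ x, exp (-x ^ 2) * physHermite k x * physHermite k x := by
  have hderiv (x : ℝ) :
      HasDerivAt (fun x => exp (-x ^ 2) * physHermite k x * physHermite (k + 1) x)
      (2 * (k + 1) * (exp (-x ^ 2) * physHermite k x * physHermite k x) -
        exp (-x ^ 2) * physHermite (k + 1) x * physHermite (k + 1) x) x := by
    refine ((((hasDerivAt_pow 2 x).neg.exp).mul (hasDerivAt_physHermite k x)).mul
      (hasDerivAt_physHermite (k + 1) x)).congr_deriv ?_
    simp only [Nat.add_sub_cancel, Pi.mul_apply, Pi.neg_apply]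
    push_cast
    linear_combination (exp (-x ^ 2) * physHermite (k + 1) x) * physHermite_succ k x
  have hint :=
    ((integrable_exp_neg_sq_mul_physHermite_mul k k).const_mul (2 * ((k : ℝ) + 1))).sub
      (integrable_exp_neg_sq_mul_physHermite_mul (k + 1) (k + 1))
  have hlim := tendsto_exp_neg_sq_mul_physHermite_mul_cocompact k (k + 1)
  have h := integral_of_hasDerivAt_of_tendsto hderiv hint (hlim.mono_left atBot_le_cocompact)
    (hlim.mono_left atTop_le_cocompact)
  rw [integral_sub ((integrable_exp_neg_sq_mul_physHermite_mul k k).const_mul _)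
    (integrable_exp_neg_sq_mul_physHermite_mul (k + 1) (k + 1)),
    MeasureTheory.integral_const_mul] at h
  linarith

theorem integral_exp_neg_sq_mul_physHermite_sq (k : ℕ) :
    ∫ x, exp (-x ^ 2) * physHermite k x * physHermite k x = 2 ^ k * k ! * √π := by
  induction k with
  | zero => simpa [physHermite] using integral_gaussian 1
  | succ k ih =>
    rw [integral_exp_neg_sq_mul_physHermite_succ_sq, ih, Nat.factorial_succ]
    push_cast
    ring

theorem hermiteFun_sq (j : ℕ) (x : ℝ) :
    hermiteFun j x ^ 2 = (2 ^ (j - 1) * (j - 1)! * √π)⁻¹ *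
      (exp (-x ^ 2) * physHermite (j - 1) x * physHermite (j - 1) x) := by
  have hA : 0 ≤ (2 : ℝ) ^ (j - 1) * (j - 1)! * √π := by positivity
  have hnorm : ((2 ^ (j - 1) * (j - 1)! * √π) ^ (-(1 : ℝ) / 2)) ^ 2 =
      (2 ^ (j - 1) * (j - 1)! * √π)⁻¹ := by
    rw [← rpow_natCast, ← rpow_mul hA]
    norm_num [rpow_neg_one]
  have hexp : exp (-x ^ 2 / 2) ^ 2 = exp (-x ^ 2) := by
    rw [← exp_nat_mul]; ring_nf
  rw [hermiteFun, mul_pow, mul_pow, hnorm, hexp]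
  ring

theorem integrable_hermiteFun_sq (j : ℕ) : Integrable fun x => hermiteFun j x ^ 2 := by
  simp_rw [hermiteFun_sq]
  exact (integrable_exp_neg_sq_mul_physHermite_mul _ _).const_mul _

theorem integral_hermiteFun_sq (j : ℕ) : ∫ x, hermiteFun j x ^ 2 = 1 := by
  simp_rw [hermiteFun_sq]
  rw [MeasureTheory.integral_const_mul, integral_exp_neg_sq_mul_physHermite_sq]
  exact inv_mul_cancel₀ (by positivity)

theorem norm_osc (μ k : ℝ) (m n : ℕ) (x : ℝ) :
    ‖osc μ k m n x‖ = √(1 + x ^ 2) ^ μ * |hermiteFun m x| * |hermiteFun n x| := by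
  have hexp : ‖Complex.exp (Complex.I * k * x)‖ = 1 := by
    rw [show Complex.I * k * x = ((k * x : ℝ) : ℂ) * Complex.I by push_cast; ring]
    exact Complex.norm_exp_ofReal_mul_I _
  rw [osc, norm_mul, norm_mul, norm_mul, hexp, Complex.norm_real, Complex.norm_real,
    Complex.norm_real, Real.norm_eq_abs, Real.norm_eq_abs, Real.norm_eq_abs,
    abs_of_nonneg (by positivity), mul_one]

theorem norm_intervalIntegral_osc_le {μ : ℝ} (hμ : 0 ≤ μ) (k : ℝ) (m n : ℕ) {a b R : ℝ}
    (ha : a ∈ Icc (-R) R) (hb : b ∈ Icc (-R) R) :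
    ‖∫ x in a..b, osc μ k m n x‖ ≤ √(1 + R ^ 2) ^ μ := by
  set g : ℝ → ℝ :=
    fun x => √(1 + R ^ 2) ^ μ * ((hermiteFun m x ^ 2 + hermiteFun n x ^ 2) / 2)
  have hg : Integrable g :=
    (((integrable_hermiteFun_sq m).add (integrable_hermiteFun_sq n)).div_const 2).const_mul _
  have hg_integral : ∫ x, g x = √(1 + R ^ 2) ^ μ := by
    rw [MeasureTheory.integral_const_mul, MeasureTheory.integral_div,
      integral_add (integrable_hermiteFun_sq m) (integrable_hermiteFun_sq n),
      integral_hermiteFun_sq, integral_hermiteFun_sq]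
    norm_num
  have hbound : ∀ x ∈ Ι a b, ‖osc μ k m n x‖ ≤ g x := by
    intro x hx
    have hxR : |x| ≤ R := abs_le.2 (uIcc_subset_Icc ha hb (uIoc_subset_uIcc hx))
    rw [norm_osc, mul_assoc]
    refine mul_le_mul ?_ ?_ (by positivity) (by positivity)
    · exact rpow_le_rpow (sqrt_nonneg _) (sqrt_le_sqrt (by nlinarith [sq_abs x, abs_nonneg x])) hμ
    · nlinarith [sq_abs (hermiteFun m x), sq_abs (hermiteFun n x),
        sq_nonneg (|hermiteFun m x| - |hermiteFun n x|)]
  calc ‖∫ x in a..b, osc μ k m n x‖ = ‖∫ x in Ι a b, osc μ k m n x‖ :=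
        norm_integral_eq_norm_integral_uIoc _
    _ ≤ ∫ x in Ι a b, g x :=
        norm_integral_le_of_norm_le hg.integrableOn
          ((ae_restrict_iff' measurableSet_uIoc).2 (ae_of_all _ hbound))
    _ ≤ ∫ x, g x := setIntegral_le_integral hg (ae_of_all _ fun x => by positivity)
    _ = _ := hg_integral

theorem Xpt_sq {j : ℕ} (hj : 1 ≤ j) : Xpt j ^ 2 = 2 * j - 1 :=
  sq_sqrt (by linarith [show (1 : ℝ) ≤ j by exact_mod_cast hj])

theorem one_le_Xpt {j : ℕ} (hj : 1 ≤ j) : 1 ≤ Xpt j :=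
  one_le_sqrt.2 (by linarith [show (1 : ℝ) ≤ j by exact_mod_cast hj])

theorem le_four_mul_of_Xpt_le {m n : ℕ} (hm : 1 ≤ m) (hn : 1 ≤ n) (h : Xpt n ≤ 2 * Xpt m) :
    (n : ℝ) ≤ 4 * m := by
  have h2 := pow_le_pow_left₀ (zero_le_one.trans (one_le_Xpt hn)) h 2
  rw [mul_pow, Xpt_sq hm, Xpt_sq hn] at h2
  linarith

theorem sqrt_two_mul_rpow_le {μ k m n : ℝ} (hμ : μ ≤ 1 / 3) (hm : 1 ≤ m)
    (hn : 0 < n) (hnm : n ≤ 4 * m) (hk : √(2 * m - 1) ^ (1 / 3 : ℝ) ≤ k) :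
    √(2 * m) ^ μ ≤ 2 * k * m ^ (-(1 / 12 - μ / 4)) * n ^ (-(1 / 12 - μ / 4)) := by
  set α : ℝ := 1 / 12 - μ / 4 with hα
  have hsplit : √(2 * m) ^ μ = √(2 * m) ^ (1 / 3 : ℝ) * (m * (4 * m)) ^ (-α) := by
    have h4 : m * (4 * m) = √(2 * m) ^ (4 : ℕ) := by
      rw [show 4 = 2 * 2 from rfl, pow_mul, sq_sqrt (by linarith)]; ring
    -- `μ = 1/3 + 4 * (-α)`
    rw [h4, ← rpow_natCast_mul (sqrt_nonneg _), ← rpow_add (sqrt_pos.2 (by linarith))]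
    congr 1
    push_cast
    ring
  have hroot : √(2 * m) ^ (1 / 3 : ℝ) ≤ 2 * √(2 * m - 1) ^ (1 / 3 : ℝ) := by
    have h8 : √(2 * m) ≤ 8 * √(2 * m - 1) := by
      rw [show (8 : ℝ) = √64 by rw [show (64 : ℝ) = 8 ^ 2 by norm_num, sqrt_sq (by norm_num)],
        ← sqrt_mul (by norm_num)]
      exact sqrt_le_sqrt (by linarith)
    calc √(2 * m) ^ (1 / 3 : ℝ) ≤ (8 * √(2 * m - 1)) ^ (1 / 3 : ℝ) := by gcongr
      _ = 2 * √(2 * m - 1) ^ (1 / 3 : ℝ) := by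
        rw [mul_rpow (by norm_num) (sqrt_nonneg _),
          show (8 : ℝ) = 2 ^ (3 : ℝ) by norm_num, ← rpow_mul (by norm_num)]
        norm_num
  have hmn : (m * (4 * m)) ^ (-α) ≤ (m * n) ^ (-α) :=
    rpow_le_rpow_of_nonpos (by positivity) (by gcongr) (by linarith)
  calc √(2 * m) ^ μ = √(2 * m) ^ (1 / 3 : ℝ) * (m * (4 * m)) ^ (-α) := hsplit
    _ ≤ 2 * k * (m * n) ^ (-α) :=
        mul_le_mul (hroot.trans (by gcongr)) hmn (by positivity)
          (by linarith [rpow_nonneg (sqrt_nonneg (2 * m - 1)) (1 / 3 : ℝ)])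
    _ = 2 * k * m ^ (-α) * n ^ (-α) := by rw [mul_rpow (by linarith) hn.le]; ring

/-- estimate on `[X_m^{2/3}, X_m - X_m^{1/3}]` for large `k`. -/
theorem hermite_oscillatory_large_k (μ : ℝ) (hμ0 : 0 ≤ μ) (hμ1 : μ < 1 / 3) :
    ∃ C : ℝ, 0 < C ∧ ∃ m₀ : ℕ, 1 ≤ m₀ ∧ ∀ m n : ℕ, m₀ < m → m ≤ n →
      Xpt m ≤ Xpt n → Xpt n ≤ 2 * Xpt m → ∀ k : ℝ, (Xpt m) ^ ((1 : ℝ) / 3) < k →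
      ‖∫ x in ((Xpt m) ^ ((2 : ℝ) / 3))..(Xpt m - (Xpt m) ^ ((1 : ℝ) / 3)), osc μ k m n x‖ ≤
        C * k * (m : ℝ) ^ (-(1 / 12 - μ / 4)) * (n : ℝ) ^ (-(1 / 12 - μ / 4)) := by
  refine ⟨2, two_pos, 1, le_rfl, fun m n hm hmn _ hnm k hk => ?_⟩
  have hm1 : 1 ≤ m := hm.le
  have hX := one_le_Xpt hm1
  have hX0 : 0 ≤ Xpt m := zero_le_one.trans hX
  have hthird : Xpt m ^ ((1 : ℝ) / 3) ≤ Xpt m := rpow_le_self_of_one_le hX (by norm_num)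
  have htwo_thirds : Xpt m ^ ((2 : ℝ) / 3) ≤ Xpt m := rpow_le_self_of_one_le hX (by norm_num)
  calc _ ≤ √(1 + Xpt m ^ 2) ^ μ :=
        norm_intervalIntegral_osc_le hμ0 k m n
          ⟨by linarith [rpow_nonneg hX0 ((2 : ℝ) / 3)], htwo_thirds⟩
          ⟨by linarith, by linarith [rpow_nonneg hX0 ((1 : ℝ) / 3)]⟩
    _ = √(2 * m) ^ μ := by rw [Xpt_sq hm1]; ring_nf
    _ ≤ _ := sqrt_two_mul_rpow_le hμ1.le (by exact_mod_cast hm1)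
        (by exact_mod_cast hm1.trans hmn)
        (le_four_mul_of_Xpt_le hm1 (hm1.trans hmn) hnm) hk.le
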